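/- arXiv:math-ph/0510067 — 3 statements merged into one kernel-verified Lean document; each statement's English description precedes it below -/
import Mathlib

section
/- For Re(z₁) > 1 and Re(z₂) > 1, the product of Riemann zeta values satisfies the second shuffle (stuffle) relation ζ(z₁)·ζ(z₂) = ζ̃(z₁,z₂) + ζ̃(z₂,z₁) − ζ̃(z₁+z₂), where ζ̃(z₁,z₂) = ∑_{n₁ ≥ n₂ ≥ 1} n₁^{-z₁} n₂^{-z₂}. -/
/-- The Riemann zeta function as a series `∑_{n ≥ 1} n^{-z}`. -/
noncomputable def zetaSum (z : ℂ) : ℂ := ∑' n : ℕ+, ((n : ℕ) : ℂ) ^ (-z)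

/-- The double zeta value with non-strict inequality:
`ζ̃(z₁, z₂) = ∑_{n₁ ≥ n₂ ≥ 1} n₁^{-z₁} n₂^{-z₂}`. -/
noncomputable def zetaTilde (z₁ z₂ : ℂ) : ℂ :=
  ∑' p : {p : ℕ+ × ℕ+ // p.2 ≤ p.1},
    ((p.1.1 : ℕ) : ℂ) ^ (-z₁) * ((p.1.2 : ℕ) : ℂ) ^ (-z₂)

lemma summable_norm_pnat_cpow {z : ℂ} (hz : 1 < z.re) :
    Summable fun n : ℕ+ => ‖((n : ℕ) : ℂ) ^ (-z)‖ := by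
  have h : Summable fun n : ℕ+ => ((n : ℕ) : ℝ) ^ (-z.re) := by
    have := (Real.summable_nat_rpow (p := -z.re)).2 (by linarith)
    exact this.comp_injective (fun a b h => by exact_mod_cast PNat.coe_injective h)
  refine h.congr fun n => ?_
  rw [Complex.norm_natCast_cpow_of_pos n.pos, Complex.neg_re]

lemma summable_pnat_cpow {z : ℂ} (hz : 1 < z.re) :
    Summable fun n : ℕ+ => ((n : ℕ) : ℂ) ^ (-z) :=
  (summable_norm_pnat_cpow hz).of_norm

/-- The swap equivalence between the two half-planes. -/
def swapEquiv : {p : ℕ+ × ℕ+ // p.2 ≤ p.1} ≃ {p : ℕ+ × ℕ+ // p.1 ≤ p.2} where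
  toFun p := ⟨p.1.swap, p.2⟩
  invFun p := ⟨p.1.swap, p.2⟩
  left_inv p := by ext <;> rfl
  right_inv p := by ext <;> rfl

/-- The diagonal equivalence. -/
def diagEquiv : ℕ+ ≃ {p : ℕ+ × ℕ+ // p.1 = p.2} where
  toFun n := ⟨(n, n), rfl⟩
  invFun p := p.1.1
  left_inv n := rfl
  right_inv p := by rcases p with ⟨⟨a, b⟩, h⟩; cases h; rfl

set_option maxHeartbeats 1000000 in
/-- Second shuffle (stuffle) relation: `ζ(z₁)ζ(z₂) = ζ̃(z₁,z₂) + ζ̃(z₂,z₁) − ζ(z₁+z₂)`. -/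
theorem zeta_stuffle_nonstrict (z₁ z₂ : ℂ) (h₁ : 1 < z₁.re) (h₂ : 1 < z₂.re) :
    zetaSum z₁ * zetaSum z₂ =
      zetaTilde z₁ z₂ + zetaTilde z₂ z₁ - zetaSum (z₁ + z₂) := by
  set f : ℕ+ × ℕ+ → ℂ := fun p => ((p.1 : ℕ) : ℂ) ^ (-z₁) * ((p.2 : ℕ) : ℂ) ^ (-z₂) with hf
  have hsf : Summable f :=
    summable_mul_of_summable_norm (f := fun n : ℕ+ => ((n : ℕ) : ℂ) ^ (-z₁))
      (g := fun n : ℕ+ => ((n : ℕ) : ℂ) ^ (-z₂))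
      (summable_norm_pnat_cpow h₁) (summable_norm_pnat_cpow h₂)
  have hprod : zetaSum z₁ * zetaSum z₂ = ∑' p : ℕ+ × ℕ+, f p :=
    tsum_mul_tsum_of_summable_norm (f := fun n : ℕ+ => ((n : ℕ) : ℂ) ^ (-z₁))
      (g := fun n : ℕ+ => ((n : ℕ) : ℂ) ^ (-z₂))
      (summable_norm_pnat_cpow h₁) (summable_norm_pnat_cpow h₂)
  set S : Set (ℕ+ × ℕ+) := {p | p.2 ≤ p.1} with hS
  set T : Set (ℕ+ × ℕ+) := {p | p.1 ≤ p.2} with hT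
  set D : Set (ℕ+ × ℕ+) := {p | p.1 = p.2} with hD
  have h1 : zetaTilde z₁ z₂ = ∑' p : S, f p := rfl
  have h2 : zetaTilde z₂ z₁ = ∑' p : T, f p :=
    Eq.trans (tsum_congr fun p => mul_comm _ _) (swapEquiv.tsum_eq fun p : T => f p)
  have hdiag : zetaSum (z₁ + z₂) = ∑' p : D, f p :=
    Eq.trans (tsum_congr fun n : ℕ+ => by
      show ((n : ℕ) : ℂ) ^ (-(z₁ + z₂)) = ((n : ℕ) : ℂ) ^ (-z₁) * ((n : ℕ) : ℂ) ^ (-z₂)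
      rw [neg_add, Complex.cpow_add _ _ (by exact_mod_cast n.ne_zero)])
      (diagEquiv.tsum_eq fun p : D => f p)
  have key : (∑' p : S, f p) + (∑' p : T, f p) = (∑' p, f p) + ∑' p : D, f p := by
    rw [tsum_subtype S f, tsum_subtype T f, tsum_subtype D f,
      ← Summable.tsum_add (hsf.indicator S) (hsf.indicator T),
      ← Summable.tsum_add hsf (hsf.indicator D)]
    refine tsum_congr fun p => ?_
    simp only [Set.indicator_apply, hS, hT, hD, Set.mem_setOf_eq]
    rcases lt_trichotomy p.1 p.2 with h | h | h
    · rw [if_neg (not_le.2 h), if_pos h.le, if_neg h.ne, zero_add, add_zero]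
    · rw [if_pos h.ge, if_pos h.le, if_pos h]
    · rw [if_pos h.le, if_neg (not_le.2 h), if_neg h.ne']
  rw [hprod, h1, h2, hdiag]
  linear_combination -key
end

section
/- Let f(z₁,z₂) = ∑_{i ≥ -I, j ≥ -J} a_{ij} z₁^i z₂^j be a function admitting a Laurent expansion at 0 in each variable (finite-order poles I, J). Define T as the projection onto the pole part in z, f₁(z) := (pole part in z₁ of f)(z,z₂)|_{z₂=z}, f₂ analogously, and R(f)(z) := (1−T)(f(z,z)) − (1−T)(T(f₁)(z) + T(f₂)(z)). Then R(f) is holomorphic at z = 0 and R(f)(0) = a_{00}, the constant coefficient of the two-variable Laurent expansion. -/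
set_option maxHeartbeats 1000000


open scoped Topology

/-- Partial diagonal Laurent sum: `S a Q z = ∑_{(i,j) with Q(i,j)} a_{ij} z^{i+j}`. -/
noncomputable def S (a : ℤ → ℤ → ℂ) (Q : ℤ × ℤ → Prop) (z : ℂ) : ℂ :=
  ∑' p : ℤ × ℤ, Set.indicator {q | Q q} (fun q : ℤ × ℤ => a q.1 q.2 * z ^ (q.1 + q.2)) p

/-- Renormalisation of a two-variable Laurent series: `R(f)(z) = (1−T)(f(z,z)) −
(1−T)(T(f₁)(z) + T(f₂)(z))` is holomorphic at `0` with value the constant Laurent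
coefficient `a₀₀`.  Here `T` is the projection onto the pole part in `z`, and
`fᵢ` is the pole part of `f` in the variable `zᵢ`, restricted to the diagonal. -/
theorem renormalisation_two_variables (I J : ℕ) (a : ℤ → ℤ → ℂ) (r : ℝ) (hr : 0 < r)
    (f : ℂ → ℂ → ℂ)
    (ha : ∀ i j : ℤ, (i < -(I : ℤ) ∨ j < -(J : ℤ)) → a i j = 0)
    (hf : ∀ z₁ z₂ : ℂ, z₁ ≠ 0 → z₂ ≠ 0 → ‖z₁‖ < r → ‖z₂‖ < r →
      HasSum (fun p : ℤ × ℤ => a p.1 p.2 * z₁ ^ p.1 * z₂ ^ p.2) (f z₁ z₂)) :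
    ∃ h : ℂ → ℂ, AnalyticAt ℂ h 0 ∧ h 0 = a 0 0 ∧
      ∀ z : ℂ, z ≠ 0 → ‖z‖ < r →
        h z = (S a (fun _ => True) z - S a (fun q => q.1 + q.2 < 0) z)
            - ((S a (fun q => q.1 < 0) z - S a (fun q => q.1 < 0 ∧ q.1 + q.2 < 0) z)
              + (S a (fun q => q.2 < 0) z - S a (fun q => q.2 < 0 ∧ q.1 + q.2 < 0) z)) := by
  classical
  set z₀ : ℂ := ((r / 2 : ℝ) : ℂ) with hz₀def
  have hr2 : (0 : ℝ) < r / 2 := by linarith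
  have hz₀ : z₀ ≠ 0 := by
    rw [hz₀def]
    exact_mod_cast hr2.ne'
  have hz₀n : ‖z₀‖ = r / 2 := by
    simp only [hz₀def, Complex.norm_real, Real.norm_eq_abs]
    rw [abs_of_pos hr2]
  have hinj : Function.Injective (fun p : ℕ × ℕ => ((p.1 : ℤ), (p.2 : ℤ))) := by
    intro p q hpq
    simp only [Prod.mk.injEq, Nat.cast_inj] at hpq
    exact Prod.ext hpq.1 hpq.2
  have hsum0 : Summable (fun p : ℤ × ℤ => a p.1 p.2 * z₀ ^ p.1 * z₀ ^ p.2) :=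
    (hf z₀ z₀ hz₀ hz₀ (by rw [hz₀n]; linarith) (by rw [hz₀n]; linarith)).summable
  have hsum1 := hsum0.comp_injective hinj
  have hsum1' : Summable (fun p : ℕ × ℕ =>
      a p.1 p.2 * z₀ ^ (p.1 : ℤ) * z₀ ^ (p.2 : ℤ)) := by
    simpa [Function.comp_def] using hsum1
  have hu : Summable (fun p : ℕ × ℕ => ‖a p.1 p.2‖ * (r / 2) ^ (p.1 + p.2)) := by
    have h1 := summable_norm_iff.mpr hsum1'
    have heq : ∀ p : ℕ × ℕ, ‖a p.1 p.2 * z₀ ^ (p.1 : ℤ) * z₀ ^ (p.2 : ℤ)‖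
        = ‖a p.1 p.2‖ * (r / 2) ^ (p.1 + p.2) := by
      intro p
      rw [norm_mul, norm_mul, norm_zpow, norm_zpow, hz₀n, zpow_natCast, zpow_natCast,
        pow_add, mul_assoc]
    simpa only [heq] using h1
  set h : ℂ → ℂ := fun z => ∑' p : ℕ × ℕ, a p.1 p.2 * z ^ (p.1 + p.2) with hh
  have hte : TendstoUniformlyOn
      (fun (t : Finset (ℕ × ℕ)) z => ∑ p ∈ t, a p.1 p.2 * z ^ (p.1 + p.2)) h
      Filter.atTop (Metric.closedBall 0 (r / 2)) := by
    apply tendstoUniformlyOn_tsum hu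
    intro p z hzmem
    rw [norm_mul, norm_pow]
    have hznorm : ‖z‖ ≤ r / 2 := by
      simpa [dist_zero_right] using Metric.mem_closedBall.mp hzmem
    gcongr
  have hda : AnalyticAt ℂ h 0 := by
    have hdiff : DifferentiableOn ℂ h (Metric.ball 0 (r / 2)) := by
      apply (hte.tendstoLocallyUniformlyOn.mono
        Metric.ball_subset_closedBall).differentiableOn ?_ Metric.isOpen_ball
      filter_upwards with t
      exact (Differentiable.fun_sum fun p _ =>
        (differentiable_pow (p.1 + p.2)).const_mul _).differentiableOn
    exact hdiff.analyticAt (Metric.ball_mem_nhds 0 hr2)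
  refine ⟨h, hda, ?_, ?_⟩
  · have hq : h 0 = ∑' p : ℕ × ℕ, a p.1 p.2 * (0 : ℂ) ^ (p.1 + p.2) := rfl
    rw [hq, tsum_eq_single ((0, 0) : ℕ × ℕ)]
    · simp
    · intro b hb
      have hb' : b.1 + b.2 ≠ 0 := by
        intro hc
        exact hb (Prod.ext (by omega) (by omega))
      simp [zero_pow hb']
  · intro z hz hzr
    have hg : Summable (fun q : ℤ × ℤ => a q.1 q.2 * z ^ (q.1 + q.2)) := by
      have h1 := (hf z z hz hz hzr hzr).summable
      have heq : ∀ q : ℤ × ℤ, a q.1 q.2 * z ^ q.1 * z ^ q.2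
          = a q.1 q.2 * z ^ (q.1 + q.2) := by
        intro q
        rw [zpow_add₀ hz, mul_assoc]
      simpa only [heq] using h1
    set g : ℤ × ℤ → ℂ := fun q : ℤ × ℤ => a q.1 q.2 * z ^ (q.1 + q.2) with hgdef
    have i1 := hg.indicator {q : ℤ × ℤ | True}
    have i2 := hg.indicator {q : ℤ × ℤ | q.1 + q.2 < 0}
    have i3 := hg.indicator {q : ℤ × ℤ | q.1 < 0}
    have i4 := hg.indicator {q : ℤ × ℤ | q.1 < 0 ∧ q.1 + q.2 < 0}
    have i5 := hg.indicator {q : ℤ × ℤ | q.2 < 0}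
    have i6 := hg.indicator {q : ℤ × ℤ | q.2 < 0 ∧ q.1 + q.2 < 0}
    have key : ∀ p : ℤ × ℤ,
        Set.indicator {q : ℤ × ℤ | True} g p
          - Set.indicator {q : ℤ × ℤ | q.1 + q.2 < 0} g p
          - ((Set.indicator {q : ℤ × ℤ | q.1 < 0} g p
              - Set.indicator {q : ℤ × ℤ | q.1 < 0 ∧ q.1 + q.2 < 0} g p)
            + (Set.indicator {q : ℤ × ℤ | q.2 < 0} g p
              - Set.indicator {q : ℤ × ℤ | q.2 < 0 ∧ q.1 + q.2 < 0} g p))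
        = Set.indicator {q : ℤ × ℤ | 0 ≤ q.1 ∧ 0 ≤ q.2} g p := by
      intro p
      simp only [Set.indicator_apply, Set.mem_setOf_eq]
      split_ifs <;> first | ring1 | (exfalso; omega)
    have hsupp : Function.support
        (Set.indicator {q : ℤ × ℤ | 0 ≤ q.1 ∧ 0 ≤ q.2} g)
        ⊆ Set.range (fun p : ℕ × ℕ => ((p.1 : ℤ), (p.2 : ℤ))) := by
      intro p hp
      have hmem : p ∈ {q : ℤ × ℤ | 0 ≤ q.1 ∧ 0 ≤ q.2} := by
        by_contra hc
        rw [Function.mem_support, Set.indicator_of_notMem hc] at hp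
        exact hp rfl
      exact ⟨(p.1.toNat, p.2.toNat), by
        simp only [Prod.ext_iff]
        exact ⟨Int.toNat_of_nonneg hmem.1, Int.toNat_of_nonneg hmem.2⟩⟩
    have hpt : ∀ p : ℕ × ℕ,
        Set.indicator {q : ℤ × ℤ | 0 ≤ q.1 ∧ 0 ≤ q.2} g ((p.1 : ℤ), (p.2 : ℤ))
          = a p.1 p.2 * z ^ (p.1 + p.2) := by
      intro p
      rw [Set.indicator_of_mem
        (by exact ⟨Int.natCast_nonneg _, Int.natCast_nonneg _⟩)]
      show a _ _ * z ^ ((p.1 : ℤ) + (p.2 : ℤ)) = _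
      rw [← zpow_natCast z (p.1 + p.2)]
      push_cast
      ring
    have hquad : h z = ∑' p : ℤ × ℤ,
        Set.indicator {q : ℤ × ℤ | 0 ≤ q.1 ∧ 0 ≤ q.2} g p := by
      have he := Function.Injective.tsum_eq hinj
        (f := Set.indicator {q : ℤ × ℤ | 0 ≤ q.1 ∧ 0 ≤ q.2} g) hsupp
      calc h z = ∑' p : ℕ × ℕ, a p.1 p.2 * z ^ (p.1 + p.2) := rfl
        _ = ∑' p : ℕ × ℕ,
            Set.indicator {q : ℤ × ℤ | 0 ≤ q.1 ∧ 0 ≤ q.2} g ((p.1 : ℤ), (p.2 : ℤ)) :=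
          tsum_congr fun p => (hpt p).symm
        _ = ∑' p : ℤ × ℤ,
            Set.indicator {q : ℤ × ℤ | 0 ≤ q.1 ∧ 0 ≤ q.2} g p := he
    rw [hquad]
    simp only [S]
    rw [← Summable.tsum_sub i3 i4, ← Summable.tsum_sub i5 i6, ← Summable.tsum_add (i3.sub i4) (i5.sub i6),
      ← Summable.tsum_sub i1 i2, ← Summable.tsum_sub (i1.sub i2) ((i3.sub i4).add (i5.sub i6))]
    exact tsum_congr fun p => (key p).symm
end

section
/- For s₁ > 1 and s_i ≥ 1 for i = 2,…,k, the multiple series ζ̃(s₁,…,s_k) = ∑_{n₁ ≥ n₂ ≥ ⋯ ≥ n_k ≥ 1} n₁^{-s₁} ⋯ n_k^{-s_k} converges. -/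
/-!
Since `n₁` is the largest index, `n₁^{-δ} ≤ ∏ᵢ nᵢ^{-δ/k}` with `δ = s₁ - 1 > 0`; together with `sᵢ ≥ 1`
this dominates each term by `∏ᵢ nᵢ^{-(1 + δ/k)}`, which is summable over all of `(ℕ+)ᵏ` as a product
of `k` convergent `p`-series.
-/

open Finset

lemma summable_fin_pi_prod {α : Type*} (k : ℕ) {f : α → ℝ} (hf0 : 0 ≤ f) (hf : Summable f) :
    Summable (fun n : Fin k → α => ∏ i, f (n i)) := by
  induction k with
  | zero => exact summable_of_hasFiniteSupport (Set.toFinite _)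
  | succ k ih =>
    have hprod : Summable (fun p : α × (Fin k → α) => f p.1 * ∏ i, f (p.2 i)) :=
      Summable.mul_of_nonneg (f := f) (g := fun n : Fin k → α => ∏ i, f (n i)) hf ih hf0
        fun n => prod_nonneg fun i _ => hf0 _
    rw [← (Fin.consEquiv fun _ => α).summable_iff]
    exact hprod.congr fun p => by simp [Fin.prod_univ_succ]

lemma summable_pnat_rpow_neg {p : ℝ} (hp : 1 < p) :
    Summable (fun m : ℕ+ => ((m : ℕ) : ℝ) ^ (-p)) :=
  (Real.summable_nat_rpow.mpr (neg_lt_neg hp)).comp_injective PNat.coe_injective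

section

variable {ι : Type*} [Fintype ι] {x : ι → ℝ}

lemma prod_rpow_neg_le_rpow_neg (hx : ∀ i, 1 ≤ x i) {u : ι → ℝ} (hu : 0 ≤ u) (i₀ : ι) :
    ∏ i, x i ^ (-u i) ≤ x i₀ ^ (-u i₀) := by
  classical
  simpa using prod_le_prod_of_subset_of_le_one (subset_univ {i₀})
    (fun i _ => Real.rpow_nonneg (zero_le_one.trans (hx i)) _)
    (fun i _ _ => Real.rpow_le_one_of_one_le_of_nonpos (hx i) (neg_nonpos.mpr (hu i)))

lemma rpow_neg_le_prod_rpow_neg_of_le (hx : ∀ i, 0 < x i) {i₀ : ι} (hmax : ∀ i, x i ≤ x i₀)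
    {δ : ℝ} (hδ : 0 ≤ δ) :
    x i₀ ^ (-δ) ≤ ∏ i, x i ^ (-(δ / Fintype.card ι)) := by
  have hcard : (Fintype.card ι : ℝ) ≠ 0 := Nat.cast_ne_zero.mpr (Fintype.card_pos_iff.mpr ⟨i₀⟩).ne'
  calc x i₀ ^ (-δ) = ∏ _i : ι, x i₀ ^ (-(δ / Fintype.card ι)) := by
        rw [prod_const, card_univ, ← Real.rpow_natCast, ← Real.rpow_mul (hx i₀).le]
        field_simp
    _ ≤ ∏ i, x i ^ (-(δ / Fintype.card ι)) :=
        prod_le_prod (fun _ _ => (Real.rpow_pos_of_pos (hx i₀) _).le) fun i _ =>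
          Real.rpow_le_rpow_of_nonpos (hx i) (hmax i) (neg_nonpos.mpr (by positivity))

lemma prod_rpow_neg_le_prod_rpow_neg_of_le (hx : ∀ i, 1 ≤ x i) {i₀ : ι} (hmax : ∀ i, x i ≤ x i₀)
    {s : ι → ℝ} (hs : ∀ i, 1 ≤ s i) :
    ∏ i, x i ^ (-s i) ≤ ∏ i, x i ^ (-(1 + (s i₀ - 1) / Fintype.card ι)) := by
  have hx0 : ∀ i, 0 < x i := fun i => zero_lt_one.trans_le (hx i)
  have hsplit : ∀ a : ι → ℝ, ∏ i, x i ^ (-(1 + a i)) = (∏ i, x i ^ (-1 : ℝ)) * ∏ i, x i ^ (-a i) :=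
    fun a => by
      rw [← prod_mul_distrib]
      exact prod_congr rfl fun i _ => by rw [← Real.rpow_add (hx0 i)]; ring_nf
  have hunit : 0 ≤ ∏ i, x i ^ (-1 : ℝ) := prod_nonneg fun i _ => (Real.rpow_pos_of_pos (hx0 i) _).le
  calc ∏ i, x i ^ (-s i) = (∏ i, x i ^ (-1 : ℝ)) * ∏ i, x i ^ (-(s i - 1)) := by
        simpa using hsplit fun i => s i - 1
    _ ≤ (∏ i, x i ^ (-1 : ℝ)) * x i₀ ^ (-(s i₀ - 1)) :=
        mul_le_mul_of_nonneg_left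
          (prod_rpow_neg_le_rpow_neg hx (fun i => sub_nonneg.mpr (hs i)) i₀) hunit
    _ ≤ (∏ i, x i ^ (-1 : ℝ)) * ∏ i, x i ^ (-((s i₀ - 1) / Fintype.card ι)) :=
        mul_le_mul_of_nonneg_left
          (rpow_neg_le_prod_rpow_neg_of_le hx0 hmax (sub_nonneg.mpr (hs i₀))) hunit
    _ = ∏ i, x i ^ (-(1 + (s i₀ - 1) / Fintype.card ι)) := (hsplit _).symm

end

/-- Convergence of the multiple zeta series `∑_{n₁ ≥ n₂ ≥ ⋯ ≥ n_k ≥ 1} n₁^{-s₁} ⋯ n_k^{-s_k}`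
when `s₁ > 1` and `s_i ≥ 1` for all `i`. -/
theorem multiple_zeta_summable (k : ℕ) (hk : 0 < k) (s : Fin k → ℝ)
    (h1 : 1 < s ⟨0, hk⟩) (hs : ∀ i, 1 ≤ s i) :
    Summable (fun n : {n : Fin k → ℕ+ // Antitone n} =>
      ∏ i, ((n.1 i : ℕ) : ℝ) ^ (-(s i))) := by
  set p : ℝ := 1 + (s ⟨0, hk⟩ - 1) / Fintype.card (Fin k)
  have hp : 1 < p := lt_add_of_pos_right 1 (div_pos (sub_pos.mpr h1) (by simpa using hk))
  have hdom : Summable (fun n : {n : Fin k → ℕ+ // Antitone n} => ∏ i, ((n.1 i : ℕ) : ℝ) ^ (-p)) :=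
    (summable_fin_pi_prod k (fun _ => Real.rpow_nonneg (Nat.cast_nonneg _) _)
      (summable_pnat_rpow_neg hp)).subtype _
  refine hdom.of_nonneg_of_le (fun n => prod_nonneg fun i _ => Real.rpow_nonneg (by positivity) _)
    fun ⟨n, hn⟩ => prod_rpow_neg_le_prod_rpow_neg_of_le (fun i => Nat.one_le_cast.mpr (n i).pos)
      (fun i => by exact_mod_cast hn (show (⟨0, hk⟩ : Fin k) ≤ i from Nat.zero_le _)) hs
end
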